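/- arXiv:2106.15022 — 6 statements merged into one kernel-verified Lean document; each statement's English description precedes it below -/
import Mathlib

section
/- Let X and Y be normed spaces and let (f^t)_{t≥0} be a family of positively homogeneous maps X → Y such that for each t, ‖f^t(x)−f^t(y)‖ ≤ K·max{‖x−y‖, e^{−2t}‖x‖, e^{−2t}‖y‖} for all x, y, and such that sup_{‖x‖≤1} ‖f^t(x)−f^s(x)‖ ≤ K|t−s| for all t, s ≥ 0. Define F : X → Y by F(x) = f^0(x) if ‖x‖ ≤ 1 and F(x) = f^{log‖x‖}(x) if ‖x‖ > 1. Then F satisfies ‖F(x)−F(z)‖ ≤ 2K‖x−z‖ + K for all x, z ∈ X. -/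
/-!
Write `t(x) = log⁺ ‖x‖`, so that `F x = f^{t(x)} x`. For `‖z‖ ≤ ‖x‖` split
`F x - F z = (f^{t(x)} x - f^{t(x)} z) + (f^{t(x)} z - f^{t(z)} z)`. Since
`‖z‖ ≤ ‖x‖ ≤ e^{t(x)}`, the error terms `e^{-2t(x)} ‖x‖`, `e^{-2t(x)} ‖z‖` are at most `1`, so the first
difference is at most `K (‖x - z‖ + 1)`. By homogeneity the second is at most
`K (t(x) - t(z)) ‖z‖`, and `t(x) - t(z) ≤ log⁺ (‖x‖ / ‖z‖)` with
`‖z‖ log⁺ (‖x‖ / ‖z‖) ≤ ‖x‖ - ‖z‖ ≤ ‖x - z‖`.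
-/

open Real

lemma Real.exp_neg_two_mul_posLog_mul_le_one {r : ℝ} (hr : 0 ≤ r) :
    exp (-2 * log⁺ r) * r ≤ 1 := by
  have hr_le : r ≤ exp (log⁺ r) := by
    rcases hr.eq_or_lt with rfl | hr
    · positivity
    · calc r = exp (log r) := (exp_log hr).symm
        _ ≤ exp (log⁺ r) := exp_le_exp.2 (le_max_right _ _)
  calc exp (-2 * log⁺ r) * r ≤ exp (-2 * log⁺ r) * exp (log⁺ r) := by gcongr
    _ = exp (-log⁺ r) := by rw [← exp_add]; ring_nf
    _ ≤ 1 := exp_le_one_iff.2 (neg_nonpos.2 posLog_nonneg)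

lemma Real.mul_posLog_sub_posLog_le {a b : ℝ} (hb : 0 ≤ b) (hba : b ≤ a) :
    b * (log⁺ a - log⁺ b) ≤ a - b := by
  rcases hb.eq_or_lt with rfl | hb
  · simpa using hba
  have hsplit : log⁺ a ≤ log⁺ b + log⁺ (a / b) := by
    simpa [mul_div_cancel₀ a hb.ne'] using posLog_mul (x := b) (y := a / b)
  have hquot : log⁺ (a / b) ≤ a / b - 1 := by
    have : 1 ≤ a / b := (one_le_div hb).2 hba
    rw [posLog_eq_log (by rwa [abs_of_nonneg (by linarith)])]
    exact log_le_sub_one_of_pos (by linarith)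
  calc b * (log⁺ a - log⁺ b) ≤ b * (a / b - 1) := mul_le_mul_of_nonneg_left (by linarith) hb.le
    _ = a - b := by field_simp

lemma norm_sub_le_mul_norm_of_posHomogeneous {X Y : Type*} [NormedAddCommGroup X]
    [NormedSpace ℝ X] [NormedAddCommGroup Y] [NormedSpace ℝ Y] {g h : X → Y}
    (hg : ∀ α : ℝ, 0 ≤ α → ∀ x, g (α • x) = α • g x)
    (hh : ∀ α : ℝ, 0 ≤ α → ∀ x, h (α • x) = α • h x)
    {C : ℝ} (hC : ∀ u : X, ‖u‖ ≤ 1 → ‖g u - h u‖ ≤ C) (z : X) :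
    ‖g z - h z‖ ≤ C * ‖z‖ := by
  set u := ‖z‖⁻¹ • z
  have hzu : ‖z‖ • u = z := by
    rcases eq_or_ne z 0 with rfl | hz
    · simp
    · rw [smul_smul, mul_inv_cancel₀ (norm_ne_zero_iff.2 hz), one_smul]
  have hu : ‖u‖ ≤ 1 := by
    rw [norm_smul, norm_inv, norm_norm]
    exact inv_mul_le_one
  calc ‖g z - h z‖ = ‖z‖ * ‖g u - h u‖ := by
        conv_lhs => rw [← hzu, hg _ (norm_nonneg z), hh _ (norm_nonneg z), ← smul_sub]
        rw [norm_smul, norm_norm]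
    _ ≤ ‖z‖ * C := by gcongr; exact hC u hu
    _ = C * ‖z‖ := mul_comm _ _

theorem stmt2 {X Y : Type*} [NormedAddCommGroup X] [NormedSpace ℝ X]
    [NormedAddCommGroup Y] [NormedSpace ℝ Y]
    (K : ℝ) (hK : 0 < K) (f : ℝ → X → Y)
    (hhom : ∀ t ≥ (0:ℝ), ∀ (α : ℝ), 0 ≤ α → ∀ x, f t (α • x) = α • f t x)
    (hlip : ∀ t ≥ (0:ℝ), ∀ x y, ‖f t x - f t y‖ ≤
      K * max ‖x - y‖ (max (Real.exp (-2*t) * ‖x‖) (Real.exp (-2*t) * ‖y‖)))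
    (hvar : ∀ t ≥ (0:ℝ), ∀ s ≥ (0:ℝ), ∀ x : X, ‖x‖ ≤ 1 → ‖f t x - f s x‖ ≤ K * |t - s|)
    (F : X → Y)
    (hF : ∀ x, F x = if ‖x‖ ≤ 1 then f 0 x else f (Real.log ‖x‖) x) :
    ∀ x z, ‖F x - F z‖ ≤ 2 * K * ‖x - z‖ + K := by
  intro x z
  wlog hzx : ‖z‖ ≤ ‖x‖ generalizing x z
  · rw [norm_sub_rev, norm_sub_rev x]
    exact this z x (le_of_not_ge hzx)
  have hF' : ∀ y, F y = f (log⁺ ‖y‖) y := fun y => by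
    rw [hF]
    split_ifs with hy
    · rw [(posLog_eq_zero_iff _).2 (by rwa [abs_norm])]
    · rw [posLog_eq_log (by rw [abs_norm]; linarith)]
  set t := log⁺ ‖x‖
  set s := log⁺ ‖z‖
  have hsame : ‖f t x - f t z‖ ≤ K * ‖x - z‖ + K := by
    have hx := exp_neg_two_mul_posLog_mul_le_one (norm_nonneg x)
    have hz : exp (-2 * t) * ‖z‖ ≤ exp (-2 * t) * ‖x‖ := by gcongr
    calc ‖f t x - f t z‖ ≤ K * max ‖x - z‖ (max (exp (-2 * t) * ‖x‖) (exp (-2 * t) * ‖z‖)) :=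
          hlip t posLog_nonneg x z
      _ ≤ K * (‖x - z‖ + 1) := by
          gcongr
          exact max_le (by linarith) (max_le (by linarith [norm_nonneg (x - z)])
            (by linarith [norm_nonneg (x - z)]))
      _ = K * ‖x - z‖ + K := by ring
  have hchange : ‖f t z - f s z‖ ≤ K * ‖x - z‖ := by
    have hst : s ≤ t := posLog_le_posLog (norm_nonneg z) hzx
    calc ‖f t z - f s z‖ ≤ K * |t - s| * ‖z‖ :=
          norm_sub_le_mul_norm_of_posHomogeneous (hhom t posLog_nonneg) (hhom s posLog_nonneg)
            (hvar t posLog_nonneg s posLog_nonneg) z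
      _ = K * (‖z‖ * (t - s)) := by rw [abs_of_nonneg (sub_nonneg.2 hst)]; ring
      _ ≤ K * (‖x‖ - ‖z‖) := by gcongr; exact mul_posLog_sub_posLog_le (norm_nonneg z) hzx
      _ ≤ K * ‖x - z‖ := by gcongr; exact norm_sub_norm_le x z
  calc ‖F x - F z‖ = ‖(f t x - f t z) + (f t z - f s z)‖ := by
        rw [hF', hF', sub_add_sub_cancel]
    _ ≤ ‖f t x - f t z‖ + ‖f t z - f s z‖ := norm_add_le _ _
    _ ≤ 2 * K * ‖x - z‖ + K := by linarith
end

section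
/- Let X and Y be normed spaces, Q : Y → X a bounded surjective linear map which is a quotient map (there is δ > 0 with Q(B_Y) ⊇ δ·B_X), and ε > 0. Then there exists a positively homogeneous map f : X → Y which is a section of Q (Q∘f = id_X) and satisfies ‖f(x)−f(y)‖ ≤ max{‖x−y‖, ε‖x‖, ε‖y‖} for all x, y ∈ X, after renorming Y by the equivalent norm ‖y‖_m = max{2^{−m}‖y‖, ‖Q(y)‖} for a suitably large m ∈ ℕ. -/
/-!
Rescale the quotient condition to pick, for every unit vector `u`, a preimage `g u` with
`‖g u‖ ≤ δ⁻¹`, and extend it positively homogeneously by `f x = ‖x‖ • g (‖x‖⁻¹ • x)`. Then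
`Q ∘ f = id`, so the second term of the renormed distance is exactly `‖x - y‖`, while
`‖f x - f y‖ ≤ 2 δ⁻¹ max ‖x‖ ‖y‖`; the factor `2 ^ (-m)` absorbs the constant `2 δ⁻¹` into `ε`
once `2 ^ (-m) ≤ ε δ / 2`.
-/

section HomogeneousExtension

variable {X Y : Type*} [NormedAddCommGroup X] [NormedSpace ℝ X]

noncomputable def homogeneousExtension [AddCommGroup Y] [Module ℝ Y] (g : X → Y) (x : X) : Y :=
  ‖x‖ • g (‖x‖⁻¹ • x)

lemma norm_inv_norm_smul_self {x : X} (hx : x ≠ 0) : ‖‖x‖⁻¹ • x‖ = 1 := by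
  rw [norm_smul, norm_inv, norm_norm, inv_mul_cancel₀ (norm_ne_zero_iff.mpr hx)]

lemma homogeneousExtension_smul [AddCommGroup Y] [Module ℝ Y] (g : X → Y) {α : ℝ}
    (hα : 0 ≤ α) (x : X) :
    homogeneousExtension g (α • x) = α • homogeneousExtension g x := by
  rcases hα.eq_or_lt with rfl | hα
  · simp [homogeneousExtension]
  have hscale : (α * ‖x‖)⁻¹ * α = ‖x‖⁻¹ := by
    rw [mul_inv, mul_right_comm, inv_mul_cancel₀ hα.ne', one_mul]
  simp only [homogeneousExtension, norm_smul, Real.norm_of_nonneg hα.le, smul_smul, hscale]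

variable [NormedAddCommGroup Y] [NormedSpace ℝ Y]

lemma apply_homogeneousExtension (Q : Y →L[ℝ] X) {g : X → Y}
    (hg : ∀ u : X, ‖u‖ = 1 → Q (g u) = u) (x : X) : Q (homogeneousExtension g x) = x := by
  rcases eq_or_ne x 0 with rfl | hx
  · simp [homogeneousExtension]
  rw [homogeneousExtension, map_smul, hg _ (norm_inv_norm_smul_self hx), smul_smul,
    mul_inv_cancel₀ (norm_ne_zero_iff.mpr hx), one_smul]

lemma norm_homogeneousExtension_le {g : X → Y} {C : ℝ} (hg : ∀ u : X, ‖u‖ = 1 → ‖g u‖ ≤ C)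
    (x : X) : ‖homogeneousExtension g x‖ ≤ C * ‖x‖ := by
  rcases eq_or_ne x 0 with rfl | hx
  · simp [homogeneousExtension]
  rw [homogeneousExtension, norm_smul, norm_norm, mul_comm]
  exact mul_le_mul_of_nonneg_right (hg _ (norm_inv_norm_smul_self hx)) (norm_nonneg x)

end HomogeneousExtension

lemma exists_preimage_of_norm_eq_one {X Y : Type*} [NormedAddCommGroup X] [NormedSpace ℝ X]
    [NormedAddCommGroup Y] [NormedSpace ℝ Y] (Q : Y →L[ℝ] X) {δ : ℝ} (hδ : 0 < δ)
    (hquot : ∀ x : X, ‖x‖ ≤ δ → ∃ y : Y, Q y = x ∧ ‖y‖ ≤ 1) {u : X} (hu : ‖u‖ = 1) :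
    ∃ y : Y, Q y = u ∧ ‖y‖ ≤ δ⁻¹ := by
  obtain ⟨y, hQy, hy⟩ := hquot (δ • u) (by rw [norm_smul, hu, Real.norm_of_nonneg hδ.le, mul_one])
  refine ⟨δ⁻¹ • y, ?_, ?_⟩
  · rw [map_smul, hQy, smul_smul, inv_mul_cancel₀ hδ.ne', one_smul]
  · rw [norm_smul, Real.norm_of_nonneg (inv_nonneg.mpr hδ.le)]
    exact mul_le_of_le_one_right (inv_nonneg.mpr hδ.le) hy

lemma mul_norm_sub_le_of_norm_le {X Y : Type*} [SeminormedAddCommGroup X]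
    [SeminormedAddCommGroup Y] {f : X → Y} {C t ε : ℝ} (hf : ∀ x, ‖f x‖ ≤ C * ‖x‖)
    (ht : 0 ≤ t) (hε : 0 ≤ ε) (htC : t * C ≤ ε / 2) (x y : X) :
    t * ‖f x - f y‖ ≤ max (ε * ‖x‖) (ε * ‖y‖) := by
  have hf' : ∀ z, t * ‖f z‖ ≤ ε / 2 * ‖z‖ := fun z => calc
    t * ‖f z‖ ≤ t * (C * ‖z‖) := mul_le_mul_of_nonneg_left (hf z) ht
    _ = t * C * ‖z‖ := (mul_assoc _ _ _).symm
    _ ≤ ε / 2 * ‖z‖ := mul_le_mul_of_nonneg_right htC (norm_nonneg z)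
  rw [← mul_max_of_nonneg _ _ hε]
  calc t * ‖f x - f y‖ ≤ t * ‖f x‖ + t * ‖f y‖ := by
        rw [← mul_add]; exact mul_le_mul_of_nonneg_left (norm_sub_le _ _) ht
    _ ≤ ε / 2 * ‖x‖ + ε / 2 * ‖y‖ := add_le_add (hf' x) (hf' y)
    _ ≤ ε * max ‖x‖ ‖y‖ := by
        nlinarith [le_max_left ‖x‖ ‖y‖, le_max_right ‖x‖ ‖y‖]

lemma exists_two_zpow_neg_le {r : ℝ} (hr : 0 < r) : ∃ m : ℕ, (2 : ℝ) ^ (-(m : ℤ)) ≤ r := by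
  obtain ⟨m, hm⟩ := exists_pow_lt_of_lt_one hr (by norm_num : (1 / 2 : ℝ) < 1)
  exact ⟨m, by rw [zpow_neg, zpow_natCast, ← inv_pow, ← one_div]; exact hm.le⟩

theorem stmt3_general {X Y : Type*} [NormedAddCommGroup X] [NormedSpace ℝ X]
    [NormedAddCommGroup Y] [NormedSpace ℝ Y]
    (Q : Y →L[ℝ] X)
    (δ : ℝ) (hδ : 0 < δ)
    (hquot : ∀ x : X, ‖x‖ ≤ δ → ∃ y : Y, Q y = x ∧ ‖y‖ ≤ 1)
    (ε : ℝ) (hε : 0 < ε) :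
    ∃ (m : ℕ) (f : X → Y),
      (∀ (α : ℝ), 0 ≤ α → ∀ x, f (α • x) = α • f x) ∧
      (∀ x, Q (f x) = x) ∧
      (∀ x y, max ((2:ℝ)^(-(m:ℤ)) * ‖f x - f y‖) ‖Q (f x) - Q (f y)‖ ≤
        max ‖x - y‖ (max (ε * ‖x‖) (ε * ‖y‖))) := by
  choose! g hgQ hgnorm using fun u (hu : ‖u‖ = 1) => exists_preimage_of_norm_eq_one Q hδ hquot hu
  obtain ⟨m, hm⟩ := exists_two_zpow_neg_le (by positivity : 0 < ε * δ / 2)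
  have hmδ : (2 : ℝ) ^ (-(m : ℤ)) * δ⁻¹ ≤ ε / 2 := by
    rw [← div_eq_mul_inv, div_le_iff₀ hδ]; linarith
  have hsection := apply_homogeneousExtension Q hgQ
  refine ⟨m, homogeneousExtension g, fun α hα x => homogeneousExtension_smul g hα x, hsection,
    fun x y => ?_⟩
  rw [hsection, hsection]
  exact max_le ((mul_norm_sub_le_of_norm_le (norm_homogeneousExtension_le hgnorm) (by positivity)
    hε.le hmδ x y).trans (le_max_right _ _)) (le_max_left _ _)

theorem stmt3 {X Y : Type*} [NormedAddCommGroup X] [NormedSpace ℝ X]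
    [NormedAddCommGroup Y] [NormedSpace ℝ Y]
    (Q : Y →L[ℝ] X) (hsurj : Function.Surjective Q)
    (δ : ℝ) (hδ : 0 < δ)
    (hquot : ∀ x : X, ‖x‖ ≤ δ → ∃ y : Y, Q y = x ∧ ‖y‖ ≤ 1)
    (ε : ℝ) (hε : 0 < ε) :
    ∃ (m : ℕ) (f : X → Y),
      (∀ (α : ℝ), 0 ≤ α → ∀ x, f (α • x) = α • f x) ∧
      (∀ x, Q (f x) = x) ∧
      (∀ x y, max ((2:ℝ)^(-(m:ℤ)) * ‖f x - f y‖) ‖Q (f x) - Q (f y)‖ ≤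
        max ‖x - y‖ (max (ε * ‖x‖) (ε * ‖y‖))) :=
  stmt3_general Q δ hδ hquot ε hε
end

section
/- Let E be a Banach space isomorphic to ℓ₂ and suppose E is a complemented subspace of ℓ∞ (i.e., there is a bounded linear projection of ℓ∞ onto E). Then a contradiction follows; in other words, ℓ∞ contains no complemented subspace isomorphic to ℓ₂. -/
/-!
Let `T : ℓ∞ → H` be a bounded operator into a real inner product space. Then
`∑ ‖T xᵢ‖² ≤ 54 ‖T‖² · supₐ ∑ xᵢ(a)²` for every finite family `xᵢ ∈ ℓ∞`.
On `ℝ^Q` with `Q` finite the best constant `K` is finite, and averaging over random signs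
improves it: for `z = ∑ ±xᵢ` the mean of `‖T z‖²` is `∑ ‖T xᵢ‖²`; the part of `z` bounded by `3`
contributes at most `9 ‖T‖²`, and by Khintchine's fourth-moment inequality the part above `3`
has square function at most a third of that of `x`. Hence `K ≤ 18 ‖T‖² + 2K/3`. Bounded
sequences are uniform limits of sequences taking finitely many values, which gives the bound on
`ℓ∞`.

If `T ∘ j = id` with `j : H → ℓ∞`, Bessel's inequality applied to the functionals
`f ↦ (j f)(a)` shows that `j(e₁), …, j(eₘ)` have square function at most `‖j‖²` for orthonormal
`e₁, …, eₘ`, so `m = ∑ ‖T j eₙ‖² ≤ 54 ‖T‖² ‖j‖²`. Thus `ℓ₂` is not complemented in `ℓ∞`.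
-/

open scoped ENNReal
open Finset

noncomputable section

namespace LinftyHilbert

/-- Sums over `ω : ι → Bool` are `2 ^ card ι` times expectations over the independent random
signs `boolSign (ω i)`. -/
def boolSign (b : Bool) : ℝ := if b then 1 else -1

section Signs

variable {ι : Type*} [DecidableEq ι]

def flipAt (i : ι) : Equiv.Perm (ι → Bool) :=
  Function.Involutive.toPerm (fun ω => Function.update ω i !(ω i)) fun ω => by simp

theorem flipAt_apply_self (i : ι) (ω : ι → Bool) : flipAt i ω i = !ω i :=
  Function.update_self ..

theorem flipAt_apply_of_ne {i j : ι} (h : j ≠ i) (ω : ι → Bool) : flipAt i ω j = ω j :=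
  Function.update_of_ne h ..

variable [Fintype ι]

theorem two_mul_sum_boolSign_insert {V : Type*} [AddCommGroup V] [Module ℝ V] (G : V → ℝ)
    (v : ι → V) {i : ι} {s : Finset ι} (hi : i ∉ s) :
    2 * ∑ ω : ι → Bool, G (∑ j ∈ insert i s, boolSign (ω j) • v j) =
      ∑ ω : ι → Bool, (G (∑ j ∈ s, boolSign (ω j) • v j + v i) +
        G (∑ j ∈ s, boolSign (ω j) • v j - v i)) := by
  rw [two_mul]
  nth_rewrite 2 [← Equiv.sum_comp (flipAt i)]
  rw [← sum_add_distrib]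
  refine sum_congr rfl fun ω _ => ?_
  have hs : ∑ j ∈ s, boolSign (flipAt i ω j) • v j = ∑ j ∈ s, boolSign (ω j) • v j :=
    sum_congr rfl fun j hj => by rw [flipAt_apply_of_ne (ne_of_mem_of_not_mem hj hi)]
  rw [sum_insert hi, sum_insert hi, hs, flipAt_apply_self]
  cases ω i <;> simp only [boolSign] <;> simp [sub_eq_add_neg, add_comm]

theorem sum_norm_sq_boolSign_smul {V : Type*} [NormedAddCommGroup V] [InnerProductSpace ℝ V]
    (v : ι → V) (s : Finset ι) :
    ∑ ω : ι → Bool, ‖∑ j ∈ s, boolSign (ω j) • v j‖ ^ 2 =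
      2 ^ Fintype.card ι * ∑ j ∈ s, ‖v j‖ ^ 2 := by
  induction s using Finset.induction_on with
  | empty => simp
  | insert i s hi ih =>
    have h := two_mul_sum_boolSign_insert (fun x : V => ‖x‖ ^ 2) v hi
    have hpar (x : V) : ‖x + v i‖ ^ 2 + ‖x - v i‖ ^ 2 = 2 * ‖x‖ ^ 2 + 2 * ‖v i‖ ^ 2 := by
      linarith [parallelogram_law_with_norm ℝ x (v i)]
    simp only [hpar, sum_add_distrib, ← mul_sum, ih, sum_const, card_univ, Fintype.card_fun,
      Fintype.card_bool, nsmul_eq_mul] at h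
    rw [sum_insert hi]
    push_cast at h
    linarith

theorem sum_pow_four_boolSign_smul_le (a : ι → ℝ) (s : Finset ι) :
    ∑ ω : ι → Bool, (∑ j ∈ s, boolSign (ω j) • a j) ^ 4 ≤
      3 * 2 ^ Fintype.card ι * (∑ j ∈ s, a j ^ 2) ^ 2 := by
  induction s using Finset.induction_on with
  | empty => simp
  | insert i s hi ih =>
    have h := two_mul_sum_boolSign_insert (fun x : ℝ => x ^ 4) a hi
    have hsecond := sum_norm_sq_boolSign_smul a s
    simp only [Real.norm_eq_abs, sq_abs] at hsecond
    have hexpand (x : ℝ) :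
        (x + a i) ^ 4 + (x - a i) ^ 4 = 2 * x ^ 4 + 12 * a i ^ 2 * x ^ 2 + 2 * a i ^ 4 := by
      ring
    simp only [hexpand, sum_add_distrib, ← mul_sum, hsecond, sum_const, card_univ, Fintype.card_fun,
      Fintype.card_bool, nsmul_eq_mul] at h
    rw [sum_insert hi]
    push_cast at h
    have hA : 0 ≤ ∑ j ∈ s, a j ^ 2 := sum_nonneg fun j _ => sq_nonneg _
    have hN : (0 : ℝ) ≤ 2 ^ Fintype.card ι := by positivity
    nlinarith [mul_nonneg hN (mul_nonneg hA (sq_nonneg (a i))),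
      mul_nonneg hN (pow_nonneg (sq_nonneg (a i)) 2)]

end Signs

section FiniteSup

variable {Q : Type*} {F : Type*} [NormedAddCommGroup F] [InnerProductSpace ℝ F]

theorem norm_sq_le_sum_sq [Fintype Q] (x : Q → ℝ) : ‖x‖ ^ 2 ≤ ∑ q, x q ^ 2 := by
  have hle : ‖x‖ ≤ √(∑ q, x q ^ 2) := (pi_norm_le_iff_of_nonneg (Real.sqrt_nonneg _)).2 fun q =>
    Real.abs_le_sqrt (single_le_sum (f := fun q => x q ^ 2) (fun _ _ => sq_nonneg _) (mem_univ q))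
  calc ‖x‖ ^ 2 ≤ √(∑ q, x q ^ 2) ^ 2 := by gcongr
    _ = ∑ q, x q ^ 2 := Real.sq_sqrt (sum_nonneg fun _ _ => sq_nonneg _)

def squareSums (T : (Q → ℝ) →L[ℝ] F) : Set ℝ :=
  {r | ∃ (ι : Type) (_ : Fintype ι) (x : ι → Q → ℝ),
    (∀ q, ∑ i, x i q ^ 2 ≤ 1) ∧ r = ∑ i, ‖T (x i)‖ ^ 2}

variable (T : (Q → ℝ) →L[ℝ] F)

theorem zero_mem_squareSums : (0 : ℝ) ∈ squareSums T :=
  ⟨Empty, inferInstance, Empty.elim, by simp, by simp⟩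

theorem bddAbove_squareSums [Fintype Q] : BddAbove (squareSums T) := by
  refine ⟨‖T‖ ^ 2 * Fintype.card Q, ?_⟩
  rintro _ ⟨ι, _, x, hx, rfl⟩
  calc ∑ i, ‖T (x i)‖ ^ 2 ≤ ∑ i, ‖T‖ ^ 2 * ∑ q, x i q ^ 2 := by
        gcongr with i
        calc ‖T (x i)‖ ^ 2 ≤ (‖T‖ * ‖x i‖) ^ 2 := by gcongr; exact T.le_opNorm _
          _ ≤ ‖T‖ ^ 2 * ∑ q, x i q ^ 2 := by rw [mul_pow]; gcongr; exact norm_sq_le_sum_sq _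
    _ = ‖T‖ ^ 2 * ∑ q, ∑ i, x i q ^ 2 := by rw [← mul_sum, sum_comm]
    _ ≤ ‖T‖ ^ 2 * ∑ _q : Q, 1 := by gcongr with q; exact hx q
    _ = ‖T‖ ^ 2 * Fintype.card Q := by simp

variable {T}

theorem sum_norm_sq_le_mul_of_mem_upperBounds {K : ℝ} (hK : K ∈ upperBounds (squareSums T))
    {ι : Type} [Fintype ι] (x : ι → Q → ℝ) {c : ℝ} (hc : 0 ≤ c)
    (hx : ∀ q, ∑ i, x i q ^ 2 ≤ c) : ∑ i, ‖T (x i)‖ ^ 2 ≤ c * K := by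
  rcases hc.eq_or_lt with rfl | hc
  · have hx0 (i : ι) : x i = 0 := funext fun q =>
      pow_eq_zero_iff two_ne_zero |>.1 <| (sum_eq_zero_iff_of_nonneg fun _ _ => sq_nonneg _).1
        ((hx q).antisymm (sum_nonneg fun _ _ => sq_nonneg _)) i (mem_univ i)
    simp [hx0]
  set t := (√c)⁻¹
  have ht : t ^ 2 = c⁻¹ := by rw [inv_pow, Real.sq_sqrt hc.le]
  have hscaled := hK ⟨ι, inferInstance, fun i => t • x i, fun q => ?_, rfl⟩
  · simp only [map_smul, norm_smul, mul_pow, Real.norm_eq_abs, sq_abs, ht, ← mul_sum] at hscaled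
    rwa [inv_mul_le_iff₀ hc] at hscaled
  · simp only [Pi.smul_apply, smul_eq_mul, mul_pow, ht, ← mul_sum]
    rw [inv_mul_le_one₀ hc]
    exact hx q

theorem sq_ite_abs_le_three (t : ℝ) : (if |t| ≤ 3 then 0 else t) ^ 2 ≤ t ^ 4 / 9 := by
  split_ifs with h
  · rw [zero_pow two_ne_zero]; positivity
  · have : 3 ^ 2 ≤ t ^ 2 := by rw [← sq_abs t]; gcongr; linarith
    nlinarith

theorem norm_apply_sq_le_of_truncate [Fintype Q] (z : Q → ℝ) :
    ‖T z‖ ^ 2 ≤ 18 * ‖T‖ ^ 2 + 2 * ‖T fun q => if |z q| ≤ 3 then 0 else z q‖ ^ 2 := by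
  set r : Q → ℝ := fun q => if |z q| ≤ 3 then 0 else z q
  have hsplit : z = (z - r) + r := by abel
  have hbdd : ‖T (z - r)‖ ≤ ‖T‖ * 3 := by
    refine T.le_opNorm_of_le ((pi_norm_le_iff_of_nonneg (by norm_num)).2 fun q => ?_)
    simp only [Pi.sub_apply, r, Real.norm_eq_abs]
    split_ifs with h <;> simp [h]
  have htri : ‖T z‖ ≤ ‖T (z - r)‖ + ‖T r‖ := by
    conv_lhs => rw [hsplit, map_add]
    exact norm_add_le _ _
  nlinarith [norm_nonneg (T z), norm_nonneg (T (z - r)), norm_nonneg (T r), norm_nonneg T,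
    sq_nonneg (‖T (z - r)‖ - ‖T r‖)]

/-- Split `z = ∑ ±uᵢ` at height `3`: the bounded part costs `9 ‖T‖²`, and by the fourth-moment
bound the tail has square function at most `2 ^ card ι / 3`. -/
theorem mem_upperBounds_squareSums_of_mem_upperBounds [Fintype Q] {K : ℝ}
    (hK : K ∈ upperBounds (squareSums T)) :
    18 * ‖T‖ ^ 2 + 2 / 3 * K ∈ upperBounds (squareSums T) := by
  classical
  rintro _ ⟨ι, _, u, hu, rfl⟩
  set N : ℝ := 2 ^ Fintype.card ι
  set z : (ι → Bool) → Q → ℝ := fun ω => ∑ i, boolSign (ω i) • u i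
  set r : (ι → Bool) → Q → ℝ := fun ω q => if |z ω q| ≤ 3 then 0 else z ω q
  have hsecond : ∑ ω, ‖T (z ω)‖ ^ 2 = N * ∑ i, ‖T (u i)‖ ^ 2 := by
    simpa [z, map_sum, map_smul] using sum_norm_sq_boolSign_smul (fun i => T (u i)) univ
  have htail (q : Q) : ∑ ω, r ω q ^ 2 ≤ N / 3 := by
    have hfourth := sum_pow_four_boolSign_smul_le (fun i => u i q) univ
    have hu0 : 0 ≤ ∑ i, u i q ^ 2 := sum_nonneg fun _ _ => sq_nonneg _
    calc ∑ ω, r ω q ^ 2 ≤ ∑ ω, z ω q ^ 4 / 9 := sum_le_sum fun ω _ => sq_ite_abs_le_three _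
      _ ≤ 3 * N * (∑ i, u i q ^ 2) ^ 2 / 9 := by
        rw [← sum_div]; gcongr; simpa [z, Finset.sum_apply] using hfourth
      _ ≤ N / 3 := by
        have : (∑ i, u i q ^ 2) ^ 2 ≤ 1 := pow_le_one₀ hu0 (hu q)
        have hN : 0 ≤ N := by positivity
        nlinarith
  have hr := sum_norm_sq_le_mul_of_mem_upperBounds hK r (by positivity) htail
  have hN : 0 < N := by positivity
  refine le_of_mul_le_mul_left ?_ hN
  calc N * ∑ i, ‖T (u i)‖ ^ 2 = ∑ ω, ‖T (z ω)‖ ^ 2 := hsecond.symm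
    _ ≤ ∑ ω, (18 * ‖T‖ ^ 2 + 2 * ‖T (r ω)‖ ^ 2) :=
      sum_le_sum fun ω _ => norm_apply_sq_le_of_truncate (z ω)
    _ = N * (18 * ‖T‖ ^ 2) + 2 * ∑ ω, ‖T (r ω)‖ ^ 2 := by
      simp [sum_add_distrib, mul_sum, N]
    _ ≤ N * (18 * ‖T‖ ^ 2 + 2 / 3 * K) := by nlinarith

theorem sum_norm_sq_apply_le [Fintype Q] {ι : Type} [Fintype ι] (x : ι → Q → ℝ) {c : ℝ}
    (hc : 0 ≤ c) (hx : ∀ q, ∑ i, x i q ^ 2 ≤ c) : ∑ i, ‖T (x i)‖ ^ 2 ≤ 54 * ‖T‖ ^ 2 * c := by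
  have hbdd := bddAbove_squareSums T
  have hsup : sSup (squareSums T) ≤ 54 * ‖T‖ ^ 2 := by
    have := csSup_le ⟨0, zero_mem_squareSums T⟩
      (mem_upperBounds_squareSums_of_mem_upperBounds fun _ hr => le_csSup hbdd hr)
    linarith
  have := sum_norm_sq_le_mul_of_mem_upperBounds (fun _ hr => (le_csSup hbdd hr).trans hsup) x hc hx
  linarith

end FiniteSup

section Linfty

local notation "ℓ∞(" α ")" => lp (fun _ : α => ℝ) ∞

variable {α : Type*} {F : Type*} [NormedAddCommGroup F] [InnerProductSpace ℝ F]

def compCLM {Q : Type*} [Fintype Q] (c : α → Q) : (Q → ℝ) →L[ℝ] ℓ∞(α) :=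
  LinearMap.mkContinuous
    { toFun x := ⟨x ∘ c, memℓp_infty ⟨‖x‖, by rintro _ ⟨a, rfl⟩; exact norm_le_pi_norm x (c a)⟩⟩
      map_add' _ _ := rfl
      map_smul' _ _ := rfl }
    1 fun x => by
      rw [one_mul]
      exact lp.norm_le_of_forall_le (norm_nonneg x) fun a => norm_le_pi_norm x (c a)

theorem norm_compCLM_le {Q : Type*} [Fintype Q] (c : α → Q) : ‖compCLM c‖ ≤ 1 :=
  LinearMap.mkContinuous_norm_le _ zero_le_one _

theorem exists_finite_range_abs_sub_le {ι : Type*} [Finite ι] (y : ι → ℓ∞(α)) {η : ℝ}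
    (hη : 0 < η) : ∃ σ : α → α, (Set.range σ).Finite ∧ ∀ i a, |y i (σ a) - y i a| ≤ η := by
  rcases isEmpty_or_nonempty α with hα | hα
  · exact ⟨id, Set.finite_range _, fun _ => isEmptyElim⟩
  -- `σ` sends each point to a representative of its cell in the grid `η ℤ^ι`.
  set g : α → ι → ℤ := fun a i => ⌊y i a / η⌋
  have hg : (Set.range g).Finite := by
    refine (Set.Finite.pi (t := fun i => Set.Icc ⌊-‖y i‖ / η⌋ ⌊‖y i‖ / η⌋)
      fun i => Set.finite_Icc _ _).subset ?_
    rintro _ ⟨a, rfl⟩ i -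
    have := abs_le.1 (lp.norm_apply_le_norm ENNReal.top_ne_zero (y i) a)
    exact ⟨Int.floor_mono (by gcongr; exact this.1), Int.floor_mono (by gcongr; exact this.2)⟩
  refine ⟨Function.invFun g ∘ g, ?_, fun i a => ?_⟩
  · rw [Set.range_comp]
    exact hg.image _
  · have hfloor : g (Function.invFun g (g a)) = g a := Function.invFun_eq ⟨a, rfl⟩
    have := Int.abs_sub_lt_one_of_floor_eq_floor (congrFun hfloor i)
    rw [← sub_div, abs_div, abs_of_pos hη, div_lt_one hη] at this
    exact this.le

theorem sum_norm_sq_apply_le_of_forall_sum_sq_le (T : ℓ∞(α) →L[ℝ] F) {ι : Type} [Fintype ι]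
    (y : ι → ℓ∞(α)) {c : ℝ} (hc : 0 ≤ c) (hy : ∀ a, ∑ i, y i a ^ 2 ≤ c) :
    ∑ i, ‖T (y i)‖ ^ 2 ≤ 54 * ‖T‖ ^ 2 * c := by
  have hclosed : IsClosed {x : ι → ℓ∞(α) | ∑ i, ‖T (x i)‖ ^ 2 ≤ 54 * ‖T‖ ^ 2 * c} :=
    isClosed_le (by fun_prop) continuous_const
  change y ∈ {x : ι → ℓ∞(α) | ∑ i, ‖T (x i)‖ ^ 2 ≤ 54 * ‖T‖ ^ 2 * c}
  rw [← hclosed.closure_eq, Metric.mem_closure_iff]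
  intro ε hε
  obtain ⟨σ, hσ, hnear⟩ := exists_finite_range_abs_sub_le y (half_pos hε)
  have := hσ.fintype
  set J := compCLM (Set.rangeFactorization σ)
  refine ⟨fun i => J fun q => y i q, ?_, (dist_pi_lt_iff hε).2 fun i => ?_⟩
  · calc ∑ i, ‖(T ∘L J) (fun q => y i q)‖ ^ 2 ≤ 54 * ‖T ∘L J‖ ^ 2 * c :=
          sum_norm_sq_apply_le _ hc fun q => hy q
      _ ≤ 54 * ‖T‖ ^ 2 * c := by
          gcongr
          exact (T.opNorm_comp_le J).trans
            (mul_le_of_le_one_right (norm_nonneg T) (norm_compCLM_le _))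
  · rw [dist_eq_norm]
    refine (lp.norm_le_of_forall_le (half_pos hε).le fun a => ?_).trans_lt (half_lt_self hε)
    rw [lp.coeFn_sub, Pi.sub_apply, Real.norm_eq_abs, abs_sub_comm]
    exact hnear i a

theorem sum_sq_apply_orthonormal_le {ι : Type*} [Fintype ι] {e : ι → F} (he : Orthonormal ℝ e)
    (φ : F →L[ℝ] ℝ) : ∑ i, φ (e i) ^ 2 ≤ ‖φ‖ ^ 2 := by
  set v := ∑ i, φ (e i) • e i
  have hv : ‖v‖ ^ 2 = ∑ i, φ (e i) ^ 2 := by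
    rw [← real_inner_self_eq_norm_sq, he.inner_sum]
    simp [sq]
  have hφv : φ v = ∑ i, φ (e i) ^ 2 := by simp [v, sq]
  have : ‖v‖ ^ 2 ≤ ‖φ‖ * ‖v‖ := by
    rw [hv, ← hφv]
    exact (le_abs_self _).trans (φ.le_opNorm v)
  rw [← hv]
  nlinarith [norm_nonneg v, norm_nonneg φ]

theorem card_le_of_orthonormal_of_comp_eq_id (T : ℓ∞(α) →L[ℝ] F) (j : F →L[ℝ] ℓ∞(α))
    (hTj : ∀ f, T (j f) = f) {ι : Type} [Fintype ι] {e : ι → F} (he : Orthonormal ℝ e) :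
    (Fintype.card ι : ℝ) ≤ 54 * ‖T‖ ^ 2 * ‖j‖ ^ 2 := by
  have hcol (a : α) : ∑ i, j (e i) a ^ 2 ≤ ‖j‖ ^ 2 := by
    refine (sum_sq_apply_orthonormal_le he (lp.evalCLM ℝ _ ∞ a ∘L j)).trans ?_
    gcongr
    exact (ContinuousLinearMap.opNorm_comp_le _ _).trans
      (mul_le_of_le_one_left (norm_nonneg j) (LinearMap.mkContinuous_norm_le _ zero_le_one _))
  calc (Fintype.card ι : ℝ) = ∑ i, ‖T (j (e i))‖ ^ 2 := by simp [hTj, he.1]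
    _ ≤ 54 * ‖T‖ ^ 2 * ‖j‖ ^ 2 :=
      sum_norm_sq_apply_le_of_forall_sum_sq_le T _ (sq_nonneg _) hcol

end Linfty

theorem exists_comp_eq_id_of_range_eq {R Z H : Type*} [Semiring R] [AddCommMonoid Z]
    [Module R Z] [TopologicalSpace Z] [AddCommMonoid H] [Module R H] [TopologicalSpace H]
    {E : Submodule R Z}
    (e : H ≃L[R] E) (P : Z →L[R] Z) (hP : ∀ x, P (P x) = P x)
    (hrange : LinearMap.range (P : Z →ₗ[R] Z) = E) :
    ∃ (T : Z →L[R] H) (j : H →L[R] Z), ∀ f, T (j f) = f := by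
  have hPE (x : Z) : P x ∈ E := hrange ▸ LinearMap.mem_range_self _ x
  refine ⟨e.symm.toContinuousLinearMap ∘L P.codRestrict E hPE,
    E.subtypeL ∘L e.toContinuousLinearMap, fun f => ?_⟩
  obtain ⟨x, hx⟩ : (e f : Z) ∈ LinearMap.range (P : Z →ₗ[R] Z) := hrange ▸ (e f).2
  have hfix : P.codRestrict E hPE (e f) = e f := Subtype.ext <| by
    change P (e f : Z) = e f
    rw [← hx]
    exact hP x
  simp [hfix]

end LinftyHilbert

end

open LinftyHilbert in
theorem stmt7_general (E : Submodule ℝ (lp (fun _ : ℕ => ℝ) ⊤))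
    (e : (lp (fun _ : ℕ => ℝ) 2) ≃L[ℝ] E)
    (P : (lp (fun _ : ℕ => ℝ) ⊤) →L[ℝ] (lp (fun _ : ℕ => ℝ) ⊤))
    (hP : ∀ x, P (P x) = P x)
    (hrange : LinearMap.range (P : (lp (fun _ : ℕ => ℝ) ⊤) →ₗ[ℝ] (lp (fun _ : ℕ => ℝ) ⊤)) = E) :
    False := by
  obtain ⟨T, j, hTj⟩ := exists_comp_eq_id_of_range_eq e P hP hrange
  set m := ⌈54 * ‖T‖ ^ 2 * ‖j‖ ^ 2⌉₊ + 1
  have hm := card_le_of_orthonormal_of_comp_eq_id T j hTj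
    ((default : HilbertBasis ℕ ℝ (lp (fun _ : ℕ => ℝ) 2)).orthonormal.comp
      (Fin.val : Fin m → ℕ) Fin.val_injective)
  have := Nat.le_ceil (54 * ‖T‖ ^ 2 * ‖j‖ ^ 2)
  push_cast [m, Fintype.card_fin] at hm
  linarith

theorem stmt7 (E : Submodule ℝ (lp (fun _ : ℕ => ℝ) ⊤))
    (hE : IsClosed (E : Set (lp (fun _ : ℕ => ℝ) ⊤)))
    (e : (lp (fun _ : ℕ => ℝ) 2) ≃L[ℝ] E)
    (P : (lp (fun _ : ℕ => ℝ) ⊤) →L[ℝ] (lp (fun _ : ℕ => ℝ) ⊤))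
    (hP : ∀ x, P (P x) = P x)
    (hrange : LinearMap.range (P : (lp (fun _ : ℕ => ℝ) ⊤) →ₗ[ℝ] (lp (fun _ : ℕ => ℝ) ⊤)) = E) :
    False :=
  stmt7_general E e P hP hrange
end

section
/- Let X and Y be normed spaces, n > 1, and F : M_n(X) → M_n(Y) a map on n×n matrices. Suppose (f^r)_{r≥0} and (g^r)_{r≥0} are two families of maps X → Y such that for every r ≥ 0, F agrees with the entrywise amplification of f^r on the sphere of radius r of M_n(X), and likewise with g^r. Then f^r(x) = g^r(x) for every r ≥ 0 and every x ∈ X with ‖x‖ ≤ r. -/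
theorem stmt10_general {X Y : Type*} [NormedAddCommGroup X]
    (n : ℕ)  -- matrices of size n + 2, i.e. size > 1
    (NX : Matrix (Fin (n+2)) (Fin (n+2)) X → ℝ)
    -- block-diagonal property: any `x` with `‖x‖ ≤ r` is the `(0,0)`-entry of a
    -- matrix of norm exactly `r` (placing a block of norm `r` on the rest of the diagonal)
    (hdiag : ∀ r : ℝ, 0 ≤ r → ∀ x : X, ‖x‖ ≤ r →
      ∃ A : Matrix (Fin (n+2)) (Fin (n+2)) X, NX A = r ∧ A 0 0 = x)
    (F : Matrix (Fin (n+2)) (Fin (n+2)) X → Matrix (Fin (n+2)) (Fin (n+2)) Y)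
    (f g : ℝ → X → Y)
    -- both families witness that `F` is a spherical amplification
    (hf : ∀ r : ℝ, 0 ≤ r → ∀ A, NX A = r → ∀ i j, F A i j = f r (A i j))
    (hg : ∀ r : ℝ, 0 ≤ r → ∀ A, NX A = r → ∀ i j, F A i j = g r (A i j)) :
    ∀ r : ℝ, 0 ≤ r → ∀ x : X, ‖x‖ ≤ r → f r x = g r x := by
  intro r hr x hx
  obtain ⟨A, hA, rfl⟩ := hdiag r hr x hx
  rw [← hf r hr A hA 0 0, hg r hr A hA 0 0]

theorem stmt10 {X Y : Type*} [NormedAddCommGroup X] [NormedAddCommGroup Y]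
    (n : ℕ)  -- matrices of size n + 2, i.e. size > 1
    (NX : Matrix (Fin (n+2)) (Fin (n+2)) X → ℝ)
    -- each entry's norm is at most the matrix norm
    (hentry : ∀ A : Matrix (Fin (n+2)) (Fin (n+2)) X, ∀ i j, ‖A i j‖ ≤ NX A)
    -- block-diagonal property: any `x` with `‖x‖ ≤ r` is the `(0,0)`-entry of a
    -- matrix of norm exactly `r` (placing a block of norm `r` on the rest of the diagonal)
    (hdiag : ∀ r : ℝ, 0 ≤ r → ∀ x : X, ‖x‖ ≤ r →
      ∃ A : Matrix (Fin (n+2)) (Fin (n+2)) X, NX A = r ∧ A 0 0 = x)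
    (F : Matrix (Fin (n+2)) (Fin (n+2)) X → Matrix (Fin (n+2)) (Fin (n+2)) Y)
    (f g : ℝ → X → Y)
    -- both families witness that `F` is a spherical amplification
    (hf : ∀ r : ℝ, 0 ≤ r → ∀ A, NX A = r → ∀ i j, F A i j = f r (A i j))
    (hg : ∀ r : ℝ, 0 ≤ r → ∀ A, NX A = r → ∀ i j, F A i j = g r (A i j)) :
    ∀ r : ℝ, 0 ≤ r → ∀ x : X, ‖x‖ ≤ r → f r x = g r x :=
  stmt10_general n NX hdiag F f g hf hg
end

section
/- Let X and Y be normed spaces, n > 1, and F : M_n(X) → M_n(Y) an ℝ-linear spherical amplification (with matrix norms satisfying ‖diag(a,b)‖ = max{‖a‖,‖b‖} and entrywise norm domination). Then F is an amplification: there exists a single map g : X → Y with F = g_n on all of M_n(X), and g is determined by g(x) = (‖x‖/r)·f^r(r·x/‖x‖) for any r > 0, where (f^r) witnesses the spherical amplification. -/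
/-! Since `F` is odd and the matrix norm is even, `f t 0 = 0` for every `t ≥ 0`. Two matrices on
the spheres of radii `r ≥ ‖x‖` and `‖x‖` with the same corner entry `x` differ by a matrix with
corner entry `0`, so linearity of `F` gives `f r x = f ‖x‖ x`. Hence `g x := f ‖x‖ x` amplifies to
`F`, and the formula for `g` is its homogeneity, which linearity of `F = g_n` forces. -/

section SphericalAmplification

variable {ι X Y : Type*} [NormedAddCommGroup X] [NormedSpace ℝ X]
  [NormedAddCommGroup Y] [NormedSpace ℝ Y]
  {NX : Matrix ι ι X → ℝ} {F : Matrix ι ι X → Matrix ι ι Y} {f : ℝ → X → Y}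

lemma map_smul_of_forall_apply_eq (hlin : IsLinearMap ℝ F) {g : X → Y}
    (hg : ∀ A i j, F A i j = g (A i j)) (i : ι) (c : ℝ) (x : X) :
    g (c • x) = c • g x := by
  have hconst : F (c • Matrix.of fun _ _ => x) i i = c • F (Matrix.of fun _ _ => x) i i := by
    rw [hlin.map_smul, Matrix.smul_apply]
  simpa only [hg, Matrix.smul_apply, Matrix.of_apply] using hconst

lemma spherical_apply_zero (i₀ : ι) (hneg : ∀ A, NX (-A) = NX A)
    (hdiag : ∀ r : ℝ, 0 ≤ r → ∀ x : X, ‖x‖ ≤ r → ∃ A, NX A = r ∧ A i₀ i₀ = x)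
    (hlin : IsLinearMap ℝ F) (hf : ∀ r : ℝ, 0 ≤ r → ∀ A, NX A = r → ∀ i j, F A i j = f r (A i j))
    {t : ℝ} (ht : 0 ≤ t) : f t 0 = 0 := by
  obtain ⟨A, hA, hA0⟩ := hdiag t ht 0 (by simpa using ht)
  -- `A` and `-A` lie on the same sphere, while `F (-A) = -F A`.
  have h := hf t ht (-A) ((hneg A).trans hA) i₀ i₀
  rw [hlin.map_neg, Matrix.neg_apply, Matrix.neg_apply, hA0, neg_zero,
    hf t ht A hA i₀ i₀, hA0] at h
  linear_combination (norm := module) (-(1 / 2) : ℝ) • h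

lemma spherical_apply_of_norm_le (i₀ : ι) (hnonneg : ∀ A, 0 ≤ NX A) (hneg : ∀ A, NX (-A) = NX A)
    (hdiag : ∀ r : ℝ, 0 ≤ r → ∀ x : X, ‖x‖ ≤ r → ∃ A, NX A = r ∧ A i₀ i₀ = x)
    (hlin : IsLinearMap ℝ F) (hf : ∀ r : ℝ, 0 ≤ r → ∀ A, NX A = r → ∀ i j, F A i j = f r (A i j))
    {r : ℝ} {x : X} (hx : ‖x‖ ≤ r) : f r x = f ‖x‖ x := by
  have hr : 0 ≤ r := (norm_nonneg x).trans hx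
  obtain ⟨A, hA, hA0⟩ := hdiag r hr x hx
  obtain ⟨B, hB, hB0⟩ := hdiag ‖x‖ (norm_nonneg x) x le_rfl
  have hdiff := hf _ (hnonneg (A - B)) (A - B) rfl i₀ i₀
  rw [hlin.map_sub, Matrix.sub_apply, Matrix.sub_apply, hA0, hB0, sub_self,
    spherical_apply_zero i₀ hneg hdiag hlin hf (hnonneg _), hf r hr A hA, hf _ (norm_nonneg x) B hB,
    hA0, hB0] at hdiff
  exact sub_eq_zero.mp hdiff

end SphericalAmplification

theorem stmt11 {X Y : Type*} [NormedAddCommGroup X] [NormedSpace ℝ X]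
    [NormedAddCommGroup Y] [NormedSpace ℝ Y]
    (n : ℕ)  -- matrices of size n + 2, i.e. size > 1
    (NX : Matrix (Fin (n+2)) (Fin (n+2)) X → ℝ)
    (hentry : ∀ A : Matrix (Fin (n+2)) (Fin (n+2)) X, ∀ i j, ‖A i j‖ ≤ NX A)
    (hNXhom : ∀ (c : ℝ) (A : Matrix (Fin (n+2)) (Fin (n+2)) X), NX (c • A) = |c| * NX A)
    (hdiag : ∀ r : ℝ, 0 ≤ r → ∀ x : X, ‖x‖ ≤ r →
      ∃ A : Matrix (Fin (n+2)) (Fin (n+2)) X, NX A = r ∧ A 0 0 = x)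
    (F : Matrix (Fin (n+2)) (Fin (n+2)) X → Matrix (Fin (n+2)) (Fin (n+2)) Y)
    (hlin : IsLinearMap ℝ F)
    (f : ℝ → X → Y)
    -- `(f r)_{r ≥ 0}` witnesses that `F` is a spherical amplification
    (hf : ∀ r : ℝ, 0 ≤ r → ∀ A, NX A = r → ∀ i j, F A i j = f r (A i j)) :
    ∃ g : X → Y, (∀ A i j, F A i j = g (A i j)) ∧
      ∀ r : ℝ, 0 < r → ∀ x : X, x ≠ 0 → g x = (‖x‖ / r) • f r ((r / ‖x‖) • x) := by
  have hnonneg : ∀ A, 0 ≤ NX A := fun A => (norm_nonneg _).trans (hentry A 0 0)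
  have hneg : ∀ A, NX (-A) = NX A := fun A => by
    simpa only [neg_one_smul, abs_neg, abs_one, one_mul] using hNXhom (-1) A
  have hg : ∀ A i j, F A i j = f ‖A i j‖ (A i j) := fun A i j => by
    rw [hf _ (hnonneg A) A rfl,
      spherical_apply_of_norm_le 0 hnonneg hneg hdiag hlin hf (hentry A i j)]
  refine ⟨fun x => f ‖x‖ x, hg, fun r hr x hx => ?_⟩
  have hxpos : 0 < ‖x‖ := norm_pos_iff.mpr hx
  have hnorm : ‖(r / ‖x‖) • x‖ = r := by
    rw [norm_smul, Real.norm_of_nonneg (by positivity), div_mul_cancel₀ _ hxpos.ne']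
  calc f ‖x‖ x = f ‖(‖x‖ / r) • (r / ‖x‖) • x‖ ((‖x‖ / r) • (r / ‖x‖) • x) := by
        rw [smul_smul, div_mul_div_cancel₀ hr.ne', div_self hxpos.ne', one_smul]
    _ = (‖x‖ / r) • f ‖(r / ‖x‖) • x‖ ((r / ‖x‖) • x) :=
        map_smul_of_forall_apply_eq (g := fun x => f ‖x‖ x) hlin hg 0 _ _
    _ = (‖x‖ / r) • f r ((r / ‖x‖) • x) := by rw [hnorm]
end

section
/- Let Z be a Banach space, u : H → Z an isomorphic embedding of a Hilbert space H into Z whose image is complemented in Z by a projection p, and suppose every closed subspace of u(H) is the image of a projection on u(H) of norm at most C. Let p_m : Z → Z be a bounded projection and X ⊆ H an infinite-dimensional closed subspace with ‖(id − p_m)|_{u(X)}‖ < 1/(C‖p‖). Then u(X) maps isomorphically onto a complemented subspace of p_m(Z): the operator w = q ∘ p_m restricted to u(X), where q = p' ∘ p and p' is a norm-≤-C projection of u(H) onto u(X), is invertible on u(X), and p_m ∘ w^{−1} ∘ q restricted to p_m(Z) is a bounded projection of p_m(Z) onto p_m(u(X)). -/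
/-!
Write `E = u(X)` and `q = p' ∘ p`, a projection of `Z` onto `E` with `‖q‖ ≤ C‖p‖`. The compression
`w = q ∘ p_m` of `p_m` to `E` differs from the identity of `E` by `q ∘ (id − p_m)|_E`, whose norm is
at most `ε C ‖p‖ < 1`, so `w` is invertible by the Neumann series (`E` is closed because `u` is
bounded below). With `v = w⁻¹ ∘ q`, the map `p_m ∘ v ∘ q` is the identity on `p_m(E)` and takes
values there, i.e. it projects `p_m(Z)` onto `p_m(E)`.
-/

section

variable {𝕜 : Type*} [NontriviallyNormedField 𝕜]

theorem Submodule.isClosed_map_of_mul_norm_le {F G : Type*} [NormedAddCommGroup F]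
    [NormedSpace 𝕜 F] [CompleteSpace F] [NormedAddCommGroup G] [NormedSpace 𝕜 G]
    (f : F →L[𝕜] G) {c : ℝ} (hc : 0 < c) (hf : ∀ x, c * ‖x‖ ≤ ‖f x‖)
    {X : Submodule 𝕜 F} (hX : IsClosed (X : Set F)) :
    IsClosed (X.map (f : F →ₗ[𝕜] G) : Set G) := by
  have hanti : AntilipschitzWith ⟨c⁻¹, by positivity⟩ f :=
    f.antilipschitz_of_bound fun x => (le_inv_mul_iff₀ hc).2 (hf x)
  rw [Submodule.map_coe]
  exact (hanti.isClosedEmbedding f.uniformContinuous).isClosedMap _ hX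

section Compression

variable {Z : Type*} [NormedAddCommGroup Z] [NormedSpace 𝕜 Z]
  {E : Submodule 𝕜 Z} {q : Z →L[𝕜] Z}

noncomputable def ContinuousLinearMap.compressTo (E : Submodule 𝕜 Z) (q : Z →L[𝕜] Z)
    (hq : ∀ z, q z ∈ E) (T : Z →L[𝕜] Z) : E →L[𝕜] E :=
  (q.codRestrict E hq).comp (T.comp E.subtypeL)

theorem ContinuousLinearMap.coe_compressTo_apply (hq : ∀ z, q z ∈ E) (T : Z →L[𝕜] Z) (e : E) :
    (q.compressTo E hq T e : Z) = q (T e) := rfl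

theorem ContinuousLinearMap.norm_one_sub_compressTo_le (hq : ∀ z, q z ∈ E)
    (hqE : ∀ z ∈ E, q z = z) {T : Z →L[𝕜] Z} {ε : ℝ} (hε : 0 ≤ ε)
    (hT : ∀ z ∈ E, ‖z - T z‖ ≤ ε * ‖z‖) :
    ‖1 - q.compressTo E hq T‖ ≤ ε * ‖q‖ := by
  refine (1 - q.compressTo E hq T).opNorm_le_bound (by positivity) fun e => ?_
  have hqe : (((1 - q.compressTo E hq T) e : E) : Z) = q (e - T e) := by
    simp [coe_compressTo_apply, hqE e e.2]
  calc ‖(1 - q.compressTo E hq T) e‖ = ‖q (e - T e)‖ := by rw [← hqe, Submodule.coe_norm]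
    _ ≤ ‖q‖ * (ε * ‖e‖) := q.le_of_opNorm_le_of_le le_rfl (hT e e.2)
    _ = ε * ‖q‖ * ‖e‖ := by ring

theorem ContinuousLinearMap.exists_inverse_compressTo [CompleteSpace Z]
    (hE : IsClosed (E : Set Z)) (hq : ∀ z, q z ∈ E) (hqE : ∀ z ∈ E, q z = z)
    {T : Z →L[𝕜] Z} {ε : ℝ} (hε : 0 ≤ ε) (hT : ∀ z ∈ E, ‖z - T z‖ ≤ ε * ‖z‖)
    (hεq : ε * ‖q‖ < 1) :
    ∃ v : Z →L[𝕜] Z, (∀ z ∈ E, v (q (T z)) = z) ∧ (∀ z ∈ E, q (T (v z)) = z) ∧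
      ∀ z, v z ∈ E := by
  have : CompleteSpace E := hE.completeSpace_coe
  set W := q.compressTo E hq T
  set r := q.codRestrict E hq
  let U : (E →L[𝕜] E)ˣ :=
    Units.oneSub (1 - W) ((q.norm_one_sub_compressTo_le hq hqE hε hT).trans_lt hεq)
  have hU : (U : E →L[𝕜] E) = W := by simp [U]
  set S : E →L[𝕜] E := ↑U⁻¹
  have hSW (e : E) : S (W e) = e := by rw [← hU]; exact DFunLike.congr_fun U.inv_mul e
  have hWS (e : E) : W (S e) = e := by rw [← hU]; exact DFunLike.congr_fun U.mul_inv e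
  refine ⟨E.subtypeL.comp (S.comp r), fun z hz => ?_, fun z hz => ?_, fun z => (S (r z)).prop⟩
  · show (S (r (q (T z))) : Z) = z
    rw [show r (q (T z)) = W ⟨z, hz⟩ from Subtype.ext (hqE _ (hq _)), hSW]
  · show (W (S (r z)) : Z) = z
    rw [show r z = ⟨z, hz⟩ from Subtype.ext (hqE z hz), hWS]

end Compression

end

theorem stmt18_general {H Z : Type*} [NormedAddCommGroup H] [InnerProductSpace ℝ H]
    [CompleteSpace H] [NormedAddCommGroup Z] [NormedSpace ℝ Z] [CompleteSpace Z]
    -- `u` is an isomorphic embedding of the Hilbert space `H` into `Z`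
    (u : H →L[ℝ] Z) (cu : ℝ) (hcu : 0 < cu) (hu : ∀ x, cu * ‖x‖ ≤ ‖u x‖)
    -- `p` is a bounded projection of `Z` onto `u(H)`
    (p : Z →L[ℝ] Z)
    (hp_range : ∀ z, p z ∈ LinearMap.range (u : H →ₗ[ℝ] Z))
    (hp_fix : ∀ z ∈ LinearMap.range (u : H →ₗ[ℝ] Z), p z = z)
    (C : ℝ)
    -- every closed subspace of `u(H)` is the image of a projection of norm at most `C`;
    -- in particular `u(X)` is, via the projection `p'` below
    (X : Submodule ℝ H) (hXcl : IsClosed (X : Set H))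
    (p' : Z →L[ℝ] Z)
    (hp'_range : ∀ z ∈ LinearMap.range (u : H →ₗ[ℝ] Z), p' z ∈ X.map (u : H →ₗ[ℝ] Z))
    (hp'_fix : ∀ z ∈ X.map (u : H →ₗ[ℝ] Z), p' z = z)
    (hp'_norm : ‖p'‖ ≤ C)
    -- `p_m` is a bounded projection with `‖(id − p_m)|_{u(X)}‖ < 1/(C‖p‖)`
    (pm : Z →L[ℝ] Z)
    (ε : ℝ) (hε : 0 ≤ ε)
    (hsmall : ∀ z ∈ X.map (u : H →ₗ[ℝ] Z), ‖z - pm z‖ ≤ ε * ‖z‖)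
    (hεsmall : ε * (C * ‖p‖) < 1) :
    -- `w = q ∘ p_m` (with `q = p' ∘ p`) is invertible on `u(X)`, with inverse `v`, and
    -- `p_m ∘ w⁻¹ ∘ q` is a bounded projection of `p_m(Z)` onto `p_m(u(X))`
    ∃ v : Z →L[ℝ] Z,
      (∀ z ∈ X.map (u : H →ₗ[ℝ] Z), v (p' (p (pm z))) = z) ∧
      (∀ z ∈ X.map (u : H →ₗ[ℝ] Z), p' (p (pm (v z))) = z) ∧
      (∀ z ∈ X.map (u : H →ₗ[ℝ] Z), v z ∈ X.map (u : H →ₗ[ℝ] Z)) ∧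
      (∀ z, pm (v (p' (p (pm (v (p' (p z))))))) = pm (v (p' (p z)))) ∧
      (∀ z, pm (v (p' (p z))) ∈ (X.map (u : H →ₗ[ℝ] Z)).map (pm : Z →ₗ[ℝ] Z)) ∧
      (∀ z ∈ (X.map (u : H →ₗ[ℝ] Z)).map (pm : Z →ₗ[ℝ] Z), pm (v (p' (p z))) = z) := by
  set E := X.map (u : H →ₗ[ℝ] Z)
  have hE : IsClosed (E : Set Z) := X.isClosed_map_of_mul_norm_le u hcu hu hXcl
  have hq : ∀ z, p'.comp p z ∈ E := fun z => hp'_range _ (hp_range z)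
  have hqE : ∀ z ∈ E, p'.comp p z = z := fun z hz => by
    simp [hp_fix z (LinearMap.map_le_range hz), hp'_fix z hz]
  have hεq : ε * ‖p'.comp p‖ < 1 :=
    calc ε * ‖p'.comp p‖ ≤ ε * (C * ‖p‖) := by
          gcongr; exact (p'.opNorm_comp_le p).trans (by gcongr)
      _ < 1 := hεsmall
  obtain ⟨v, hvw, hwv, hvE⟩ :=
    ContinuousLinearMap.exists_inverse_compressTo hE hq hqE hε hsmall hεq
  refine ⟨v, hvw, hwv, fun z _ => hvE z, fun z => ?_, fun z => ⟨_, hvE _, rfl⟩, ?_⟩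
  · exact congrArg pm (hvw _ (hvE _))
  · rintro _ ⟨w, hw, rfl⟩
    exact congrArg pm (hvw w hw)

theorem stmt18 {H Z : Type*} [NormedAddCommGroup H] [InnerProductSpace ℝ H]
    [CompleteSpace H] [NormedAddCommGroup Z] [NormedSpace ℝ Z] [CompleteSpace Z]
    -- `u` is an isomorphic embedding of the Hilbert space `H` into `Z`
    (u : H →L[ℝ] Z) (cu : ℝ) (hcu : 0 < cu) (hu : ∀ x, cu * ‖x‖ ≤ ‖u x‖)
    -- `p` is a bounded projection of `Z` onto `u(H)`
    (p : Z →L[ℝ] Z) (hp_idem : ∀ z, p (p z) = p z)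
    (hp_range : ∀ z, p z ∈ LinearMap.range (u : H →ₗ[ℝ] Z))
    (hp_fix : ∀ z ∈ LinearMap.range (u : H →ₗ[ℝ] Z), p z = z)
    (C : ℝ) (hC : 0 < C)
    -- every closed subspace of `u(H)` is the image of a projection of norm at most `C`;
    -- in particular `u(X)` is, via the projection `p'` below
    (X : Submodule ℝ H) (hXcl : IsClosed (X : Set H)) (hXinf : ¬ FiniteDimensional ℝ ↥X)
    (p' : Z →L[ℝ] Z) (hp'_idem : ∀ z, p' (p' z) = p' z)
    (hp'_range : ∀ z ∈ LinearMap.range (u : H →ₗ[ℝ] Z), p' z ∈ X.map (u : H →ₗ[ℝ] Z))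
    (hp'_fix : ∀ z ∈ X.map (u : H →ₗ[ℝ] Z), p' z = z)
    (hp'_norm : ‖p'‖ ≤ C)
    -- `p_m` is a bounded projection with `‖(id − p_m)|_{u(X)}‖ < 1/(C‖p‖)`
    (pm : Z →L[ℝ] Z) (hpm_idem : ∀ z, pm (pm z) = pm z)
    (ε : ℝ) (hε : 0 ≤ ε)
    (hsmall : ∀ z ∈ X.map (u : H →ₗ[ℝ] Z), ‖z - pm z‖ ≤ ε * ‖z‖)
    (hεsmall : ε * (C * ‖p‖) < 1) :
    -- `w = q ∘ p_m` (with `q = p' ∘ p`) is invertible on `u(X)`, with inverse `v`, and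
    -- `p_m ∘ w⁻¹ ∘ q` is a bounded projection of `p_m(Z)` onto `p_m(u(X))`
    ∃ v : Z →L[ℝ] Z,
      (∀ z ∈ X.map (u : H →ₗ[ℝ] Z), v (p' (p (pm z))) = z) ∧
      (∀ z ∈ X.map (u : H →ₗ[ℝ] Z), p' (p (pm (v z))) = z) ∧
      (∀ z ∈ X.map (u : H →ₗ[ℝ] Z), v z ∈ X.map (u : H →ₗ[ℝ] Z)) ∧
      (∀ z, pm (v (p' (p (pm (v (p' (p z))))))) = pm (v (p' (p z)))) ∧
      (∀ z, pm (v (p' (p z))) ∈ (X.map (u : H →ₗ[ℝ] Z)).map (pm : Z →ₗ[ℝ] Z)) ∧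
      (∀ z ∈ (X.map (u : H →ₗ[ℝ] Z)).map (pm : Z →ₗ[ℝ] Z), pm (v (p' (p z))) = z) :=
  stmt18_general u cu hcu hu p hp_range hp_fix C X hXcl p' hp'_range hp'_fix hp'_norm pm ε hε hsmall
    hεsmall
end
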